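/- Let (L, ρ, τ) be a probabilistic metric space and let A, B be nonempty subsets of L. Then F_{AB} = ε₀ if and only if cl(A) = cl(B), where cl denotes closure in the strong topology of L. -/
import Mathlib


/-- The modified Lévy distance between two functions `F G : ℝ → ℝ`:
the infimum of all `h > 0` such that for every `x ∈ (-1/h, 1/h)` the inequalities
`F (x - h) - h ≤ G x ≤ F (x + h) + h` and `G (x - h) - h ≤ F x ≤ G (x + h) + h` hold. -/
noncomputable def dL (F G : ℝ → ℝ) : ℝ :=
  sInf {h : ℝ | 0 < h ∧ ∀ x ∈ Set.Ioo (-h⁻¹) h⁻¹,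
    (F (x - h) - h ≤ G x ∧ G x ≤ F (x + h) + h) ∧
    (G (x - h) - h ≤ F x ∧ F x ≤ G (x + h) + h)}

/-- A distance distribution function: a nondecreasing, left-continuous function
`F : ℝ → [0,1]` with `F x = 0` for all `x ≤ 0`.  `Δ⁺` is the set of all such functions. -/
def IsDDF (F : ℝ → ℝ) : Prop :=
  Monotone F ∧ (∀ x : ℝ, ContinuousWithinAt F (Set.Iio x) x) ∧
    (∀ x : ℝ, F x ≤ 1) ∧ (∀ x : ℝ, x ≤ 0 → F x = 0)

/-- The distance distribution function `ε₀`. -/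
noncomputable def eps0 : ℝ → ℝ := fun x => if x ≤ 0 then 0 else 1

/-- A triangle function `τ` on `Δ⁺`: commutative, associative, nondecreasing in each
argument, continuous (sequentially, with respect to the modified Lévy metric `dL`,
which metrizes the topology of weak convergence), with identity `ε₀`. -/
structure IsTriangleFn (τ : (ℝ → ℝ) → (ℝ → ℝ) → (ℝ → ℝ)) : Prop where
  isDDF : ∀ F G, IsDDF F → IsDDF G → IsDDF (τ F G)
  comm : ∀ F G, IsDDF F → IsDDF G → τ F G = τ G F
  assoc : ∀ F G K, IsDDF F → IsDDF G → IsDDF K → τ (τ F G) K = τ F (τ G K)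
  mono : ∀ F₁ F₂ G₁ G₂, IsDDF F₁ → IsDDF F₂ → IsDDF G₁ → IsDDF G₂ →
    F₁ ≤ F₂ → G₁ ≤ G₂ → τ F₁ G₁ ≤ τ F₂ G₂
  ident : ∀ F, IsDDF F → τ F eps0 = F
  continuous : ∀ (Fn Gn : ℕ → ℝ → ℝ) (F G : ℝ → ℝ),
    (∀ n, IsDDF (Fn n)) → (∀ n, IsDDF (Gn n)) → IsDDF F → IsDDF G →
    Filter.Tendsto (fun n => dL (Fn n) F) Filter.atTop (nhds 0) →
    Filter.Tendsto (fun n => dL (Gn n) G) Filter.atTop (nhds 0) →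
    Filter.Tendsto (fun n => dL (τ (Fn n) (Gn n)) (τ F G)) Filter.atTop (nhds 0)

/-- A probabilistic metric space `(L, ρ, τ)`. -/
structure IsPMSpace {L : Type*} (ρ : L → L → ℝ → ℝ)
    (τ : (ℝ → ℝ) → (ℝ → ℝ) → (ℝ → ℝ)) : Prop where
  isDDF : ∀ p q, IsDDF (ρ p q)
  triangleFn : IsTriangleFn τ
  refl : ∀ p, ρ p p = eps0
  eq_of : ∀ p q, ρ p q = eps0 → p = q
  symm : ∀ p q, ρ p q = ρ q p
  tri_ineq : ∀ p q r, τ (ρ p q) (ρ q r) ≤ ρ p r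

/-- `τ` is sup-continuous: `τ (sup_i F_i) G = sup_i τ (F_i) G` pointwise, for every
(nonempty) family `{F_i} ⊆ Δ⁺` and every `G ∈ Δ⁺`. -/
def SupContinuous (τ : (ℝ → ℝ) → (ℝ → ℝ) → (ℝ → ℝ)) : Prop :=
  ∀ (ι : Type) [Nonempty ι] (Fi : ι → ℝ → ℝ) (G : ℝ → ℝ),
    (∀ i, IsDDF (Fi i)) → IsDDF G →
    ∀ x : ℝ, τ (fun y => ⨆ i, Fi i y) G x = ⨆ i, τ (Fi i) G x

/-- Condition (W): for all `F, G ∈ Δ⁺`, `x > 0` and real `α, β`,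
`F x > α` and `G x > β` imply `τ F G x > max (α + β - 1) 0`. -/
def CondW (τ : (ℝ → ℝ) → (ℝ → ℝ) → (ℝ → ℝ)) : Prop :=
  ∀ F G, IsDDF F → IsDDF G → ∀ x : ℝ, 0 < x → ∀ α β : ℝ,
    α < F x → β < G x → max (α + β - 1) 0 < τ F G x

/-- Convergence of a sequence in the strong topology of the PM space:
for every `t > 0`, eventually `F_{p_n p}(t) > 1 - t`. -/
def SConvSeq {L : Type*} (ρ : L → L → ℝ → ℝ) (pn : ℕ → L) (p : L) : Prop :=
  ∀ t : ℝ, 0 < t → ∃ n₀ : ℕ, ∀ n ≥ n₀, 1 - t < ρ (pn n) p t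

/-- Cauchy sequence in a PM space. -/
def SCauchySeq {L : Type*} (ρ : L → L → ℝ → ℝ) (pn : ℕ → L) : Prop :=
  ∀ t : ℝ, 0 < t → ∃ n₀ : ℕ, ∀ m ≥ n₀, ∀ n ≥ n₀, 1 - t < ρ (pn m) (pn n) t

/-- Completeness of a PM space: every Cauchy sequence converges in the strong topology. -/
def SComplete {L : Type*} (ρ : L → L → ℝ → ℝ) : Prop :=
  ∀ pn : ℕ → L, SCauchySeq ρ pn → ∃ p : L, SConvSeq ρ pn p

/-- The closure of a set in the strong topology of a PM space (the strong topology is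
metrizable, so the closure coincides with the sequential closure). -/
def SClosure {L : Type*} (ρ : L → L → ℝ → ℝ) (A : Set L) : Set L :=
  {q | ∃ pn : ℕ → L, (∀ n, pn n ∈ A) ∧ SConvSeq ρ pn q}

/-- A set closed in the strong topology of a PM space. -/
def SClosed {L : Type*} (ρ : L → L → ℝ → ℝ) (A : Set L) : Prop :=
  SClosure ρ A ⊆ A

/-- The probabilistic distance from a point to a set: `F_{pB}(x) = sup {F_{pq}(x) : q ∈ B}`. -/
noncomputable def probDistToSet {L : Type*} (ρ : L → L → ℝ → ℝ) (p : L) (B : Set L)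
    (x : ℝ) : ℝ :=
  sSup ((fun q => ρ p q x) '' B)

/-- `Γ*_{AB}(x) = inf {F_{pB}(x) : p ∈ A}`. -/
noncomputable def gammaStar {L : Type*} (ρ : L → L → ℝ → ℝ) (A B : Set L) (x : ℝ) : ℝ :=
  sInf ((fun p => probDistToSet ρ p B x) '' A)

/-- `F*_{AB}`, the left-continuous regularization of `Γ*_{AB}`:
`F*_{AB}(x) = sup_{x' < x} Γ*_{AB}(x')`. -/
noncomputable def fStar {L : Type*} (ρ : L → L → ℝ → ℝ) (A B : Set L) (x : ℝ) : ℝ :=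
  sSup (gammaStar ρ A B '' Set.Iio x)

/-- The probabilistic Pompeiu-Hausdorff distance:
`H(A,B)(x) = F_{AB}(x) = min (F*_{AB}(x)) (F*_{BA}(x))`. -/
noncomputable def probHaus {L : Type*} (ρ : L → L → ℝ → ℝ) (A B : Set L) (x : ℝ) : ℝ :=
  min (fStar ρ A B x) (fStar ρ B A x)

/-- Convergence of a sequence of sets with respect to the probabilistic
Pompeiu-Hausdorff metric `H`. -/
def HConv {L : Type*} (ρ : L → L → ℝ → ℝ) (An : ℕ → Set L) (A : Set L) : Prop :=
  ∀ t : ℝ, 0 < t → ∃ n₀ : ℕ, ∀ n ≥ n₀, 1 - t < probHaus ρ (An n) A t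

/-- Cauchy sequence of sets with respect to the probabilistic Pompeiu-Hausdorff metric `H`. -/
def HCauchy {L : Type*} (ρ : L → L → ℝ → ℝ) (An : ℕ → Set L) : Prop :=
  ∀ t : ℝ, 0 < t → ∃ n₀ : ℕ, ∀ m ≥ n₀, ∀ n ≥ n₀, 1 - t < probHaus ρ (An m) (An n) t

lemma IsDDF.nonneg {F : ℝ → ℝ} (hF : IsDDF F) (x : ℝ) : 0 ≤ F x := by
  rcases le_or_gt x 0 with h | h
  · rw [hF.2.2.2 x h]
  · rw [← hF.2.2.2 0 le_rfl]; exact hF.1 h.le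

lemma eps0_nonneg (x : ℝ) : 0 ≤ eps0 x := by unfold eps0; split <;> norm_num

lemma eps0_le_one (x : ℝ) : eps0 x ≤ 1 := by unfold eps0; split <;> norm_num

lemma eps0_of_pos {x : ℝ} (h : 0 < x) : eps0 x = 1 := by
  simp [eps0, not_le.mpr h]

lemma eps0_of_nonpos {x : ℝ} (h : x ≤ 0) : eps0 x = 0 := by simp [eps0, h]

lemma eps0_isDDF : IsDDF eps0 := by
  refine ⟨?_, ?_, eps0_le_one, fun x h => eps0_of_nonpos h⟩
  · intro a b hab
    unfold eps0
    split <;> split <;> try norm_num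
    next h1 h2 => exact absurd (hab.trans h2) h1
  · intro x
    rcases le_or_gt x 0 with h | h
    · have : ∀ y ∈ Set.Iio x, eps0 y = 0 := fun y hy => eps0_of_nonpos (le_of_lt (lt_of_lt_of_le hy h))
      rw [ContinuousWithinAt, eps0_of_nonpos h]
      refine Filter.Tendsto.congr' ?_ tendsto_const_nhds
      filter_upwards [self_mem_nhdsWithin] with y hy using (this y hy).symm
    · rw [ContinuousWithinAt, eps0_of_pos h]
      refine Filter.Tendsto.congr' ?_ tendsto_const_nhds
      have : Set.Ioo 0 x ∈ nhdsWithin x (Set.Iio x) := Ioo_mem_nhdsLT_of_mem ⟨h, le_rfl⟩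
      filter_upwards [this] with y hy using (eps0_of_pos hy.1).symm

lemma dL_nonneg (F G : ℝ → ℝ) : 0 ≤ dL F G :=
  Real.sInf_nonneg (fun h hh => hh.1.le)

lemma mem_dL_set_of_one_lt {F G : ℝ → ℝ} (hF : IsDDF F) (hG : IsDDF G) {h : ℝ}
    (hh : 1 < h) : h ∈ {h : ℝ | 0 < h ∧ ∀ x ∈ Set.Ioo (-h⁻¹) h⁻¹,
    (F (x - h) - h ≤ G x ∧ G x ≤ F (x + h) + h) ∧
    (G (x - h) - h ≤ F x ∧ F x ≤ G (x + h) + h)} := by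
  refine ⟨by linarith, fun x _ => ?_⟩
  have h1 := hF.2.2.1 (x - h); have h2 := hG.nonneg x
  have h3 := hG.2.2.1 (x - h); have h4 := hF.nonneg x
  have h5 := hF.nonneg (x + h); have h6 := hG.nonneg (x + h)
  have h7 := hG.2.2.1 x; have h8 := hF.2.2.1 x
  exact ⟨⟨by linarith, by linarith⟩, ⟨by linarith, by linarith⟩⟩

lemma dL_le_eps0 {F : ℝ → ℝ} (hF : IsDDF F) {η : ℝ} (hη : 0 < η)
    (h : 1 - η < F η) : dL F eps0 ≤ η := by
  apply csInf_le ⟨0, fun b hb => hb.1.le⟩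
  refine ⟨hη, fun x hx => ?_⟩
  refine ⟨⟨?_, ?_⟩, ?_, ?_⟩
  · rcases le_or_gt x 0 with hx0 | hx0
    · rw [eps0_of_nonpos hx0, hF.2.2.2 (x - η) (by linarith)]; linarith
    · rw [eps0_of_pos hx0]; have := hF.2.2.1 (x - η); linarith
  · rcases le_or_gt x 0 with hx0 | hx0
    · rw [eps0_of_nonpos hx0]; have := hF.nonneg (x + η); linarith
    · rw [eps0_of_pos hx0]
      have : F η ≤ F (x + η) := hF.1 (by linarith)
      linarith
  · rcases le_or_gt (x - η) 0 with hx0 | hx0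
    · rw [eps0_of_nonpos hx0]; have := hF.nonneg x; linarith
    · rw [eps0_of_pos hx0]
      have : F η ≤ F x := hF.1 (by linarith)
      linarith
  · rcases le_or_gt (x + η) 0 with hx0 | hx0
    · rw [eps0_of_nonpos hx0, hF.2.2.2 x (by linarith)]; linarith
    · rw [eps0_of_pos hx0]; have := hF.2.2.1 x; linarith

lemma lt_of_dL_eps0_lt {F : ℝ → ℝ} (hF : IsDDF F) {t : ℝ} (ht : 0 < t)
    (h : dL F eps0 < min t t⁻¹) : 1 - t < F t := by
  obtain ⟨h', hmem, hlt⟩ := exists_lt_of_csInf_lt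
    ⟨2, mem_dL_set_of_one_lt hF eps0_isDDF one_lt_two⟩ h
  have hh' : 0 < h' := hmem.1
  have hht : h' < t := lt_of_lt_of_le hlt (min_le_left _ _)
  have hhti : h' < t⁻¹ := lt_of_lt_of_le hlt (min_le_right _ _)
  have hxt : t ∈ Set.Ioo (-h'⁻¹) h'⁻¹ := by
    constructor
    · have : 0 < h'⁻¹ := inv_pos.mpr hh'; linarith
    · exact (lt_inv_comm₀ hh' ht).mp hhti
  have := ((hmem.2 t hxt).2.1)
  rw [eps0_of_pos (by linarith : (0:ℝ) < t - h')] at this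
  linarith

lemma key_eta {τ : (ℝ → ℝ) → (ℝ → ℝ) → (ℝ → ℝ)} (hτ : IsTriangleFn τ) {t : ℝ} (ht : 0 < t) :
    ∃ η > 0, ∀ F G, IsDDF F → IsDDF G → 1 - η < F η → 1 - η < G η → 1 - t < τ F G t := by
  by_contra hcon
  push_neg at hcon
  have H : ∀ n : ℕ, ∃ F G, IsDDF F ∧ IsDDF G ∧
      1 - (1 / (n + 1) : ℝ) < F (1 / (n + 1)) ∧ 1 - (1 / (n + 1) : ℝ) < G (1 / (n + 1)) ∧
      τ F G t ≤ 1 - t := by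
    intro n
    have hpos : (0:ℝ) < 1 / (n + 1) := by positivity
    obtain ⟨F, G, hF, hG, h1, h2, h3⟩ := hcon (1 / (n + 1)) hpos
    exact ⟨F, G, hF, hG, h1, h2, h3⟩
  choose Fn Gn hFn hGn h1n h2n h3n using H
  have hFd : Filter.Tendsto (fun n => dL (Fn n) eps0) Filter.atTop (nhds 0) := by
    refine squeeze_zero (fun n => dL_nonneg _ _) (fun n => dL_le_eps0 (hFn n) (by positivity) (h1n n)) ?_
    exact tendsto_one_div_add_atTop_nhds_zero_nat
  have hGd : Filter.Tendsto (fun n => dL (Gn n) eps0) Filter.atTop (nhds 0) := by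
    refine squeeze_zero (fun n => dL_nonneg _ _) (fun n => dL_le_eps0 (hGn n) (by positivity) (h2n n)) ?_
    exact tendsto_one_div_add_atTop_nhds_zero_nat
  have hcont := hτ.continuous Fn Gn eps0 eps0 hFn hGn eps0_isDDF eps0_isDDF hFd hGd
  rw [hτ.ident eps0 eps0_isDDF] at hcont
  have hmin : (0:ℝ) < min t t⁻¹ := lt_min ht (inv_pos.mpr ht)
  obtain ⟨n, hn⟩ := (hcont.eventually (eventually_lt_nhds hmin)).exists
  have := lt_of_dL_eps0_lt (hτ.isDDF _ _ (hFn n) (hGn n)) ht hn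
  linarith [h3n n]

section PM
variable {L : Type*} {ρ : L → L → ℝ → ℝ} {τ : (ℝ → ℝ) → (ℝ → ℝ) → (ℝ → ℝ)}
  (hPM : IsPMSpace ρ τ) {A B : Set L}

include hPM

lemma pd_le_one (p : L) (B : Set L) (x : ℝ) : probDistToSet ρ p B x ≤ 1 := by
  rcases B.eq_empty_or_nonempty with rfl | hB
  · simp [probDistToSet, Real.sSup_empty]
  · exact Real.sSup_le (by rintro y ⟨q, hq, rfl⟩; exact (hPM.isDDF p q).2.2.1 x) zero_le_one

lemma pd_nonneg (p : L) (B : Set L) (x : ℝ) : 0 ≤ probDistToSet ρ p B x := by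
  rcases B.eq_empty_or_nonempty with rfl | ⟨q, hq⟩
  · simp [probDistToSet, Real.sSup_empty]
  · exact le_trans ((hPM.isDDF p q).nonneg x)
      (le_csSup ⟨1, by rintro y ⟨r, hr, rfl⟩; exact (hPM.isDDF p r).2.2.1 x⟩ ⟨q, hq, rfl⟩)

lemma pd_zero (p : L) {B : Set L} (hB : B.Nonempty) {x : ℝ} (hx : x ≤ 0) :
    probDistToSet ρ p B x = 0 := by
  refine le_antisymm (Real.sSup_le ?_ le_rfl) (pd_nonneg hPM p B x)
  rintro y ⟨q, hq, rfl⟩; exact le_of_eq ((hPM.isDDF p q).2.2.2 x hx)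

lemma gamma_le_one (A B : Set L) (x : ℝ) : gammaStar ρ A B x ≤ 1 := by
  rcases A.eq_empty_or_nonempty with rfl | ⟨p, hp⟩
  · simp [gammaStar, Real.sInf_empty]
  · exact le_trans (csInf_le ⟨0, by rintro y ⟨q, hq, rfl⟩; exact pd_nonneg hPM q B x⟩ ⟨p, hp, rfl⟩)
      (pd_le_one hPM p B x)

lemma gamma_nonneg (A B : Set L) (x : ℝ) : 0 ≤ gammaStar ρ A B x :=
  Real.sInf_nonneg (by rintro y ⟨q, hq, rfl⟩; exact pd_nonneg hPM q B x)

lemma fStar_le_one (A B : Set L) (x : ℝ) : fStar ρ A B x ≤ 1 :=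
  Real.sSup_le (by rintro y ⟨x', hx', rfl⟩; exact gamma_le_one hPM A B x') zero_le_one

lemma bddAbove_gamma (A B : Set L) (s : Set ℝ) : BddAbove (gammaStar ρ A B '' s) :=
  ⟨1, by rintro y ⟨x', hx', rfl⟩; exact gamma_le_one hPM A B x'⟩

lemma fStar_nonneg (A B : Set L) (x : ℝ) : 0 ≤ fStar ρ A B x :=
  le_trans (gamma_nonneg hPM A B (x - 1))
    (le_csSup (bddAbove_gamma hPM A B _) ⟨x - 1, by simp, rfl⟩)

end PM

section PM2
variable {L : Type*} {ρ : L → L → ℝ → ℝ} {τ : (ℝ → ℝ) → (ℝ → ℝ) → (ℝ → ℝ)}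
  (hPM : IsPMSpace ρ τ) {A B : Set L}

include hPM

lemma mem_sclosure_iff {p : L} :
    p ∈ SClosure ρ B ↔ ∀ t : ℝ, 0 < t → ∃ q ∈ B, 1 - t < ρ p q t := by
  constructor
  · rintro ⟨qn, hqn, hconv⟩ t ht
    obtain ⟨n₀, hn₀⟩ := hconv t ht
    exact ⟨qn n₀, hqn n₀, by rw [hPM.symm]; exact hn₀ n₀ le_rfl⟩
  · intro h
    choose qn hqn hq using fun n : ℕ => h (1 / (n + 1)) (by positivity)
    refine ⟨qn, hqn, fun t ht => ?_⟩
    obtain ⟨n₀, hn₀⟩ := exists_nat_one_div_lt ht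
    refine ⟨n₀, fun n hn => ?_⟩
    have h1 : (1 : ℝ) / (n + 1) ≤ 1 / (n₀ + 1) := by
      apply one_div_le_one_div_of_le (by positivity)
      have := (Nat.cast_le (α := ℝ)).mpr hn; linarith
    have h2 : (1 : ℝ) / (n + 1) < t := lt_of_le_of_lt h1 hn₀
    have h3 : ρ p (qn n) (1 / (n + 1)) ≤ ρ p (qn n) t := (hPM.isDDF p (qn n)).1 h2.le
    rw [hPM.symm]
    have := hq n
    linarith

lemma exists_close {t : ℝ} (hB : B.Nonempty) (h1 : 1 ≤ fStar ρ A B t)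
    {p : L} (hp : p ∈ A) (ht : 0 < t) : ∃ q ∈ B, 1 - t < ρ p q t := by
  have hne : (gammaStar ρ A B '' Set.Iio t).Nonempty := ⟨_, ⟨t - 1, by simp, rfl⟩⟩
  have hlt : 1 - t < fStar ρ A B t := by linarith
  obtain ⟨y, ⟨x', hx', rfl⟩, hy⟩ := exists_lt_of_lt_csSup hne hlt
  have hpd : 1 - t < probDistToSet ρ p B x' := by
    refine lt_of_lt_of_le hy (csInf_le ?_ ⟨p, hp, rfl⟩)
    exact ⟨0, by rintro z ⟨q, hq, rfl⟩; exact pd_nonneg hPM q B x'⟩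
  obtain ⟨z, ⟨q, hq, rfl⟩, hz⟩ := exists_lt_of_lt_csSup (hB.image _) hpd
  exact ⟨q, hq, lt_of_lt_of_le hz ((hPM.isDDF p q).1 hx'.le)⟩

lemma sclosure_subset_of (h : A ⊆ SClosure ρ B) : SClosure ρ A ⊆ SClosure ρ B := by
  rintro r ⟨pn, hpn, hconv⟩
  rw [mem_sclosure_iff hPM]
  intro t ht
  obtain ⟨η, hη, hkey⟩ := key_eta hPM.triangleFn ht
  obtain ⟨n, hn⟩ := hconv η hη
  obtain ⟨q, hq, hq2⟩ := (mem_sclosure_iff hPM).mp (h (hpn n)) η hη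
  refine ⟨q, hq, ?_⟩
  rw [hPM.symm] at hq2
  have := hkey (ρ r (pn n)) (ρ (pn n) q) (hPM.isDDF _ _) (hPM.isDDF _ _)
    (by rw [hPM.symm]; exact hn n le_rfl) (by rw [hPM.symm]; exact hq2)
  calc 1 - t < τ (ρ r (pn n)) (ρ (pn n) q) t := this
    _ ≤ ρ r q t := hPM.tri_ineq r (pn n) q t

lemma pd_eq_one_of_mem_closure {p : L} (hp : p ∈ SClosure ρ B) {x : ℝ} (hx : 0 < x) :
    probDistToSet ρ p B x = 1 := by
  refine le_antisymm (pd_le_one hPM p B x) ?_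
  by_contra hlt
  push_neg at hlt
  set d := probDistToSet ρ p B x with hd
  set s := min (x / 2) ((1 - d) / 2) with hs
  have hs0 : 0 < s := lt_min (by linarith) (by linarith)
  obtain ⟨q, hq, hq2⟩ := (mem_sclosure_iff hPM).mp hp s hs0
  have h1 : ρ p q s ≤ ρ p q x := (hPM.isDDF p q).1 (by
    have : s ≤ x / 2 := min_le_left _ _; linarith)
  have h2 : ρ p q x ≤ d := le_csSup ⟨1, by rintro z ⟨r, hr, rfl⟩; exact (hPM.isDDF p r).2.2.1 x⟩
    ⟨q, hq, rfl⟩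
  have h3 : s ≤ (1 - d) / 2 := min_le_right _ _
  linarith

lemma fStar_eq_one_of (hA : A.Nonempty) (h : A ⊆ SClosure ρ B) {x : ℝ} (hx : 0 < x) :
    fStar ρ A B x = 1 := by
  refine le_antisymm (fStar_le_one hPM A B x) ?_
  have hg : gammaStar ρ A B (x / 2) = 1 := by
    refine le_antisymm (gamma_le_one hPM A B _) ?_
    refine le_csInf (hA.image _) ?_
    rintro y ⟨p, hp, rfl⟩
    exact le_of_eq (pd_eq_one_of_mem_closure hPM (h hp) (by linarith)).symm
  calc (1:ℝ) = gammaStar ρ A B (x / 2) := hg.symm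
    _ ≤ fStar ρ A B x := le_csSup (bddAbove_gamma hPM A B _) ⟨x / 2, Set.mem_Iio.mpr (by linarith), rfl⟩

lemma fStar_eq_zero_of {x : ℝ} (hA : A.Nonempty) (hB : B.Nonempty) (hx : x ≤ 0) :
    fStar ρ A B x = 0 := by
  refine le_antisymm (Real.sSup_le ?_ le_rfl) (fStar_nonneg hPM A B x)
  rintro y ⟨x', hx', rfl⟩
  have : ∀ p ∈ A, probDistToSet ρ p B x' = 0 := fun p _ =>
    pd_zero hPM p hB (by simp at hx'; linarith)
  refine le_trans (csInf_le ⟨0, ?_⟩ ⟨hA.some, hA.some_mem, rfl⟩) ?_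
  · rintro z ⟨q, hq, rfl⟩; exact pd_nonneg hPM q B x'
  · exact le_of_eq (this hA.some hA.some_mem)

end PM2

lemma subset_sclosure {L : Type*} {ρ : L → L → ℝ → ℝ} {τ : (ℝ → ℝ) → (ℝ → ℝ) → (ℝ → ℝ)}
    (hPM : IsPMSpace ρ τ) (A : Set L) : A ⊆ SClosure ρ A := by
  intro p hp
  refine ⟨fun _ => p, fun _ => hp, fun t ht => ⟨0, fun n _ => ?_⟩⟩
  rw [hPM.refl p, eps0_of_pos ht]; linarith


/-- For nonempty subsets `A, B` of a PM space, `F_{AB} = ε₀` if and only if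
`cl(A) = cl(B)`, where `cl` is the closure in the strong topology. -/
theorem probHaus_eq_eps0_iff {L : Type*} (ρ : L → L → ℝ → ℝ)
    (τ : (ℝ → ℝ) → (ℝ → ℝ) → (ℝ → ℝ)) (hPM : IsPMSpace ρ τ)
    (A B : Set L) (hA : A.Nonempty) (hB : B.Nonempty) :
    probHaus ρ A B = eps0 ↔ SClosure ρ A = SClosure ρ B := by
  constructor
  · intro h
    have hmin : ∀ t : ℝ, 0 < t →
        min (fStar ρ A B t) (fStar ρ B A t) = 1 := by
      intro t ht
      have := congrFun h t
      rwa [eps0_of_pos ht] at this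
    have hfab : ∀ t : ℝ, 0 < t → 1 ≤ fStar ρ A B t := fun t ht =>
      (hmin t ht) ▸ min_le_left _ _
    have hfba : ∀ t : ℝ, 0 < t → 1 ≤ fStar ρ B A t := fun t ht =>
      (hmin t ht) ▸ min_le_right _ _
    have hAB : A ⊆ SClosure ρ B := fun p hp => (mem_sclosure_iff hPM).mpr
      (fun t ht => exists_close hPM hB (hfab t ht) hp ht)
    have hBA : B ⊆ SClosure ρ A := fun p hp => (mem_sclosure_iff hPM).mpr
      (fun t ht => exists_close hPM hA (hfba t ht) hp ht)
    exact Set.Subset.antisymm (sclosure_subset_of hPM hAB) (sclosure_subset_of hPM hBA)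
  · intro h
    have hAB : A ⊆ SClosure ρ B := fun p hp => h ▸ subset_sclosure hPM A hp
    have hBA : B ⊆ SClosure ρ A := fun p hp => h.symm ▸ subset_sclosure hPM B hp
    funext x
    rcases le_or_gt x 0 with hx | hx
    · unfold probHaus
      rw [fStar_eq_zero_of hPM hA hB hx, fStar_eq_zero_of hPM hB hA hx,
        eps0_of_nonpos hx]
      simp
    · unfold probHaus
      rw [fStar_eq_one_of hPM hA hAB hx, fStar_eq_one_of hPM hB hBA hx, eps0_of_pos hx]
      simp
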